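/- For each fixed x2 ∈ [0,m2], the function x1 ↦ r1(x1,x2) is concave on the set of x1 ∈ [0,m1] with m − (1−p)(x1+x2) > 0; symmetrically, for each fixed x1 ∈ [0,m1], the function x2 ↦ r2(x1,x2) is concave on the set of x2 ∈ [0,m2] with m − (1−p)(x1+x2) > 0. -/

import Mathlib

/-- Average reward of pool 1 in the two-player miner's dilemma with betrayal,
where the total mining power is `m1 + m2 + t`. -/
noncomputable def r1 (m1 m2 t p x1 x2 : ℝ) : ℝ :=
  (m1*m2 + m1*x1 + p*m2*x2 - (1-p)*x1^2 - (1-p)*x1*x2) /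
    (((m1+m2+t) - (1-p)*(x1+x2)) * (m1*m2 + m1*x1 + m2*x2))

/-- Average reward of pool 2. -/
noncomputable def r2 (m1 m2 t p x1 x2 : ℝ) : ℝ :=
  (m1*m2 + m2*x2 + p*m1*x1 - (1-p)*x2^2 - (1-p)*x1*x2) /
    (((m1+m2+t) - (1-p)*(x1+x2)) * (m1*m2 + m1*x1 + m2*x2))

/-- `(x1, x2)` is a pure Nash equilibrium of the two-player miner's dilemma game. -/
noncomputable def IsNash (m1 m2 t p x1 x2 : ℝ) : Prop :=
  x1 ∈ Set.Icc 0 m1 ∧ x2 ∈ Set.Icc 0 m2 ∧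
  (∀ x ∈ Set.Icc (0:ℝ) m1, r1 m1 m2 t p x x2 ≤ r1 m1 m2 t p x1 x2) ∧
  (∀ x ∈ Set.Icc (0:ℝ) m2, r2 m1 m2 t p x1 x ≤ r2 m1 m2 t p x1 x2)

/-!
For fixed `x2`, the map `x1 ↦ r1 x1 x2` is a quadratic over the product of two affine factors
`D₁ = m - (1-p)(x1+x2)` and `D₂ = m1 m2 + m1 x1 + m2 x2`, with leading coefficient `1/m1` times
that of the denominator. Partial fractions give `r1 = 1/m1 + α/D₁ + β/D₂`; on the region both
factors are positive and both residues `α, β` are nonpositive, so each summand is concave.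
The statement for `r2` is the one for `r1` with the two pools exchanged.
-/

lemma concaveOn_div_affine {s : Set ℝ} (hs : Convex ℝ s) {a b c : ℝ} (hc : c ≤ 0)
    (hpos : ∀ x ∈ s, 0 < a + b * x) : ConcaveOn ℝ s fun x => c / (a + b * x) := by
  let g : ℝ →ᵃ[ℝ] ℝ := AffineMap.lineMap a (a + b)
  have hg : ∀ x, g x = a + b * x := fun x => by
    simp only [g, AffineMap.lineMap_apply_module']; ring
  have hinv : ConvexOn ℝ (g ⁻¹' Set.Ioi 0) fun x => (g x)⁻¹ := by
    have h := (convexOn_zpow (𝕜 := ℝ) (-1)).comp_affineMap g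
    simp only [zpow_neg_one] at h
    exact h
  refine ((hinv.subset (fun x hx => by simp [hg, hpos x hx]) hs).smul (neg_nonneg.2 hc)).neg.congr
    fun x _ => ?_
  simp [hg, div_eq_mul_inv]

lemma div_mul_eq_add_div_add_div {K : Type*} [Field K] {N D₁ D₂ k c₁ c₂ : K}
    (h₁ : D₁ ≠ 0) (h₂ : D₂ ≠ 0) (h : N = k * D₁ * D₂ + c₁ * D₂ + c₂ * D₁) :
    N / (D₁ * D₂) = k + c₁ / D₁ + c₂ / D₂ := by
  rw [h]
  field_simp

lemma r1_eq_partial_fractions {m1 m2 t p x1 x2 : ℝ} (hm1 : m1 ≠ 0)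
    (hD₁ : (m1+m2+t) - (1-p)*x2 + -(1-p)*x1 ≠ 0) (hD₂ : m2*(m1+x2) + m1*x1 ≠ 0)
    (hE : (1-p)*m2*(m1+x2) + m1*((m1+m2+t) - (1-p)*x2) ≠ 0) :
    r1 m1 m2 t p x1 x2 = 1/m1
      + ((1-p)*m2*(m1+p*x2) - ((m1+m2+t) - (1-p)*x2)*(m2+t))
          / ((1-p)*m2*(m1+x2) + m1*((m1+m2+t) - (1-p)*x2))
          / ((m1+m2+t) - (1-p)*x2 + -(1-p)*x1)
      + (1-p)*m2*(m1*x2^2 - m2*(m1+x2)^2)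
          / (m1*((1-p)*m2*(m1+x2) + m1*((m1+m2+t) - (1-p)*x2)))
          / (m2*(m1+x2) + m1*x1) := by
  rw [r1, show ((m1+m2+t) - (1-p)*(x1+x2)) * (m1*m2 + m1*x1 + m2*x2)
      = ((m1+m2+t) - (1-p)*x2 + -(1-p)*x1) * (m2*(m1+x2) + m1*x1) by ring]
  refine div_mul_eq_add_div_add_div hD₁ hD₂ ?_
  set E := (1-p)*m2*(m1+x2) + m1*((m1+m2+t) - (1-p)*x2) with hE_def
  field_simp
  rw [hE_def]
  ring

lemma r2_eq_r1_swap (m1 m2 t p x1 x2 : ℝ) : r2 m1 m2 t p x1 x2 = r1 m2 m1 t p x2 x1 := by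
  simp only [r1, r2]
  ring_nf

theorem concaveOn_r1 {m1 m2 t p x2 : ℝ} (hm1 : 0 < m1) (hm2 : 0 < m2) (ht : 0 ≤ t)
    (hp0 : 0 ≤ p) (hp1 : p < 1) (hx2 : x2 ∈ Set.Icc 0 m2) :
    ConcaveOn ℝ {x1 : ℝ | x1 ∈ Set.Icc (0:ℝ) m1 ∧ 0 < (m1+m2+t) - (1-p)*(x1+x2)}
      (fun x1 => r1 m1 m2 t p x1 x2) := by
  obtain ⟨hx20, hx2m⟩ := hx2
  set S := {x1 : ℝ | x1 ∈ Set.Icc (0:ℝ) m1 ∧ 0 < (m1+m2+t) - (1-p)*(x1+x2)}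
  have hq : 0 < 1 - p := by linarith
  have hS : Convex ℝ S :=
    (convex_Icc 0 m1).inter <| Antitone.convex_gt (f := fun x1 => (m1+m2+t) - (1-p)*(x1+x2))
      (fun a b hab => by nlinarith) 0
  have hA : m1 + t + p*m2 ≤ (m1+m2+t) - (1-p)*x2 := by
    nlinarith [mul_le_mul_of_nonneg_left hx2m hq.le]
  have hE : 0 < (1-p)*m2*(m1+x2) + m1*((m1+m2+t) - (1-p)*x2) :=
    add_pos_of_nonneg_of_pos (mul_nonneg (mul_nonneg hq.le hm2.le) (by linarith))
      (mul_pos hm1 (by nlinarith [mul_nonneg hp0 hm2.le]))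
  have hα : (1-p)*m2*(m1+p*x2) - ((m1+m2+t) - (1-p)*x2)*(m2+t) ≤ 0 := by
    nlinarith [mul_le_mul_of_nonneg_right hA (by linarith : 0 ≤ m2 + t),
      mul_nonneg (mul_nonneg hp0 hm1.le) hm2.le,
      mul_nonneg (mul_nonneg hp0 hm2.le) (sub_nonneg.2 hx2m),
      mul_nonneg (mul_nonneg (mul_nonneg hp0 hp0) hm2.le) hx20,
      mul_nonneg (by positivity : 0 ≤ m1 + t + p*m2) ht]
  have hβ : (1-p)*m2*(m1*x2^2 - m2*(m1+x2)^2) ≤ 0 := by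
    have : m1*x2^2 ≤ m2*(m1+x2)^2 := by
      nlinarith [mul_le_mul_of_nonneg_left hx2m (mul_nonneg hm1.le hx20),
        mul_nonneg hm2.le (sq_nonneg m1), mul_nonneg hm2.le (sq_nonneg x2)]
    exact mul_nonpos_of_nonneg_of_nonpos (mul_nonneg hq.le hm2.le) (by linarith)
  have hD₁ : ∀ x ∈ S, 0 < (m1+m2+t) - (1-p)*x2 + -(1-p)*x := fun x hx => by
    linarith [hx.2]
  have hD₂ : ∀ x ∈ S, 0 < m2*(m1+x2) + m1*x := fun x hx => by
    have := hx.1.1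
    positivity
  refine (((concaveOn_const (1/m1) hS).add
    (concaveOn_div_affine hS (div_nonpos_of_nonpos_of_nonneg hα hE.le) hD₁)).add
    (concaveOn_div_affine hS (div_nonpos_of_nonpos_of_nonneg hβ (mul_pos hm1 hE).le) hD₂)).congr
    fun x hx => ?_
  exact (r1_eq_partial_fractions hm1.ne' (hD₁ x hx).ne' (hD₂ x hx).ne' hE.ne').symm

theorem stmt0 (m1 m2 t p : ℝ) (hm1 : 0 < m1) (hm2 : 0 < m2) (ht : 0 ≤ t)
    (hp0 : 0 ≤ p) (hp1 : p < 1) :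
    (∀ x2 ∈ Set.Icc (0:ℝ) m2,
      ConcaveOn ℝ {x1 : ℝ | x1 ∈ Set.Icc (0:ℝ) m1 ∧ 0 < (m1+m2+t) - (1-p)*(x1+x2)}
        (fun x1 => r1 m1 m2 t p x1 x2)) ∧
    (∀ x1 ∈ Set.Icc (0:ℝ) m1,
      ConcaveOn ℝ {x2 : ℝ | x2 ∈ Set.Icc (0:ℝ) m2 ∧ 0 < (m1+m2+t) - (1-p)*(x1+x2)}
        (fun x2 => r2 m1 m2 t p x1 x2)) := by
  refine ⟨fun x2 hx2 => concaveOn_r1 hm1 hm2 ht hp0 hp1 hx2, fun x1 hx1 => ?_⟩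
  simp only [r2_eq_r1_swap]
  convert concaveOn_r1 hm2 hm1 ht hp0 hp1 hx1 using 5
  ring
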